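/- arXiv:1810.04351 — 2 statements merged into one kernel-verified Lean document; each statement's English description precedes it below -/
import Mathlib

section
/- (Barrier supersolution) Let d ≥ 2, α > d-2, 0 < β < α+2-d, and let ρ ∈ C¹ be bounded above and below by positive constants on a neighborhood of 0 in ℝ^d. Then there exists c > 0 depending on α, β, ρ, d such that the function w(x) = |x|^β satisfies div(ρ²(1+|x|^{-α})∇w)(x) ≤ −(β/2)(α+2−β−d) ρ(x)² |x|^{−(α+2−β)} for all 0 < |x| ≤ c. -/
open MeasureTheory Metric Filter

theorem hasFDerivAt_norm_rpow' {F : Type*} [NormedAddCommGroup F] [InnerProductSpace ℝ F]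
    {x : F} (hx : x ≠ 0) (p : ℝ) :
    HasFDerivAt (fun z : F => ‖z‖ ^ p) ((p * ‖x‖ ^ (p - 2)) • (innerSL ℝ x)) x := by
  have hxn : (0:ℝ) < ‖x‖ := norm_pos_iff.mpr hx
  have h1 : HasFDerivAt (fun z : F => ‖z‖ ^ (2:ℕ)) (2 • (innerSL ℝ x)) x :=
    (hasStrictFDerivAt_norm_sq x).hasFDerivAt
  have h2 : HasDerivAt (fun t : ℝ => t ^ (p / 2)) (p / 2 * (‖x‖ ^ (2:ℕ)) ^ (p / 2 - 1))
      (‖x‖ ^ (2:ℕ)) :=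
    Real.hasDerivAt_rpow_const (Or.inl (by positivity))
  have h3 := h2.comp_hasFDerivAt x h1
  have hfun : (fun t : ℝ => t ^ (p / 2)) ∘ (fun z : F => ‖z‖ ^ (2:ℕ)) =
      fun z : F => ‖z‖ ^ p := by
    funext z
    simp only [Function.comp_apply, ← Real.rpow_natCast ‖z‖ 2,
      ← Real.rpow_mul (norm_nonneg z)]
    congr 1
    push_cast; ring
  rw [hfun] at h3
  have hpow : ((‖x‖ ^ (2:ℕ) : ℝ)) ^ (p/2 - 1) = ‖x‖ ^ (p - 2) := by
    rw [← Real.rpow_natCast ‖x‖ 2, ← Real.rpow_mul (norm_nonneg x)]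
    congr 1
    push_cast; ring
  have heq : (p / 2 * (‖x‖ ^ (2:ℕ)) ^ (p / 2 - 1)) • (2 • (innerSL ℝ x)) =
      (p * ‖x‖ ^ (p - 2)) • innerSL ℝ x := by
    ext y
    simp only [ContinuousLinearMap.coe_smul', Pi.smul_apply, smul_eq_mul, hpow]
    ring
  rw [heq] at h3
  exact h3

theorem gradient_norm_rpow' {F : Type*} [NormedAddCommGroup F] [InnerProductSpace ℝ F]
    [CompleteSpace F] {x : F} (hx : x ≠ 0) (p : ℝ) :
    gradient (fun z : F => ‖z‖ ^ p) x = (p * ‖x‖ ^ (p - 2)) • x := by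
  have h : HasGradientAt (fun z : F => ‖z‖ ^ p) ((p * ‖x‖ ^ (p - 2)) • x) x := by
    rw [hasGradientAt_iff_hasFDerivAt]
    convert hasFDerivAt_norm_rpow' hx p using 1
    · rfl
    ext y
    simp [InnerProductSpace.toDual_apply_apply, real_inner_smul_left]
  exact h.gradient

theorem div_sum_eq' (d : ℕ) (S : EuclideanSpace ℝ (Fin d) →L[ℝ] ℝ)
    (x : EuclideanSpace ℝ (Fin d)) (a : ℝ) :
    (∑ i : Fin d, ((a • ContinuousLinearMap.id ℝ (EuclideanSpace ℝ (Fin d))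
        + S.smulRight x) (EuclideanSpace.single i 1)) i)
      = d * a + S x := by
  have hx : ∑ i : Fin d, x i • EuclideanSpace.single i (1:ℝ) = x := by
    have := (EuclideanSpace.basisFun (Fin d) ℝ).toBasis.sum_repr x
    simpa [EuclideanSpace.basisFun_apply] using this
  have h1 : ∀ i : Fin d, ((a • ContinuousLinearMap.id ℝ (EuclideanSpace ℝ (Fin d))
      + S.smulRight x) (EuclideanSpace.single i 1)) i
      = a * (EuclideanSpace.single i (1:ℝ)) i + S (EuclideanSpace.single i 1) * x i := by
    intro i
    simp [ContinuousLinearMap.smulRight_apply]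
  rw [Finset.sum_congr rfl fun i _ => h1 i, Finset.sum_add_distrib]
  congr 1
  · simp [EuclideanSpace.single_apply]
  · calc ∑ i : Fin d, S (EuclideanSpace.single i 1) * x i
        = ∑ i : Fin d, S (x i • EuclideanSpace.single i 1) := by
          simp [_root_.map_smul, mul_comm]
      _ = S x := by rw [← map_sum, hx]

set_option maxHeartbeats 2000000 in
/-- the function `w(x) = |x|^β` is a barrier (supersolution) for the
weighted operator `div(ρ²(1+|x|^{-α})∇·)` near the origin. -/
theorem stmt_6 (d : ℕ) (hd : 2 ≤ d) (α β : ℝ) (hα : (d : ℝ) - 2 < α)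
    (hβ0 : 0 < β) (hβ : β < α + 2 - d)
    (r₁ : ℝ) (hr₁ : 0 < r₁) (ρ : EuclideanSpace ℝ (Fin d) → ℝ)
    (hρ : ContDiffOn ℝ 1 ρ (ball (0 : EuclideanSpace ℝ (Fin d)) r₁))
    (m M : ℝ) (hm : 0 < m)
    (hbd : ∀ x ∈ ball (0 : EuclideanSpace ℝ (Fin d)) r₁, m ≤ ρ x ∧ ρ x ≤ M) :
    ∃ c : ℝ, 0 < c ∧ c ≤ r₁ ∧
      ∀ x : EuclideanSpace ℝ (Fin d), 0 < ‖x‖ → ‖x‖ ≤ c →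
        (∑ i : Fin d,
          fderiv ℝ
            (fun y : EuclideanSpace ℝ (Fin d) =>
              ((ρ y) ^ 2 * (1 + ‖y‖ ^ (-α))) •
                gradient (fun z : EuclideanSpace ℝ (Fin d) => ‖z‖ ^ β) y)
            x (EuclideanSpace.single i 1) i) ≤
          -(β / 2) * (α + 2 - β - d) * (ρ x) ^ 2 * ‖x‖ ^ (-(α + 2 - β)) := by
  have hd2 : (2:ℝ) ≤ (d:ℝ) := by exact_mod_cast hd
  have hα0 : 0 < α := lt_of_le_of_lt (by linarith) hα
  have hκ : 0 < α + 2 - β - (d:ℝ) := by linarith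
  have h0mem : (0:EuclideanSpace ℝ (Fin d)) ∈ ball (0:EuclideanSpace ℝ (Fin d)) r₁ := mem_ball_self hr₁
  have hM0 : 0 < M := lt_of_lt_of_le hm (le_trans (hbd 0 h0mem).1 (hbd 0 h0mem).2)
  -- bound on the derivative of ρ
  have hcont : ContinuousOn (fderiv ℝ ρ) (ball (0:EuclideanSpace ℝ (Fin d)) r₁) :=
    hρ.continuousOn_fderiv_of_isOpen isOpen_ball le_rfl
  have hsub : closedBall (0:EuclideanSpace ℝ (Fin d)) (r₁/2) ⊆ ball (0:EuclideanSpace ℝ (Fin d)) r₁ :=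
    closedBall_subset_ball (by linarith)
  obtain ⟨K₀, hK₀⟩ := (isCompact_closedBall (0:EuclideanSpace ℝ (Fin d)) (r₁/2)).exists_bound_of_continuousOn
    (hcont.mono hsub)
  set K := max K₀ 0 with hKdef
  have hK0 : 0 ≤ K := le_max_right _ _
  have hK : ∀ y ∈ closedBall (0:EuclideanSpace ℝ (Fin d)) (r₁/2), ‖fderiv ℝ ρ y‖ ≤ K := fun y hy =>
    (hK₀ y hy).trans (le_max_left _ _)
  -- choice of c
  set T := β * (α + 2 - β - d) * m^2 / 2 with hTdef
  have hT0 : 0 < T := by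
    apply div_pos _ two_pos
    apply mul_pos (mul_pos hβ0 hκ) (by positivity)
  have hφc : ContinuousAt (fun t : ℝ =>
      β*M^2*((d:ℝ)+β-2)*t^α + 2*M*K*β*t^(α+1) + 2*M*K*β*t) 0 := by
    apply ContinuousAt.add
    apply ContinuousAt.add
    · exact continuousAt_const.mul (Real.continuousAt_rpow_const 0 α (Or.inr hα0.le))
    · exact continuousAt_const.mul
        (Real.continuousAt_rpow_const 0 (α+1) (Or.inr (by linarith)))
    · exact continuousAt_const.mul continuousAt_id
  have hφ0 : (β*M^2*((d:ℝ)+β-2)*(0:ℝ)^α + 2*M*K*β*(0:ℝ)^(α+1) + 2*M*K*β*(0:ℝ)) = 0 := by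
    rw [Real.zero_rpow hα0.ne', Real.zero_rpow (by linarith : α+1 ≠ 0)]
    ring
  have hev : ∀ᶠ t in nhds (0:ℝ),
      β*M^2*((d:ℝ)+β-2)*t^α + 2*M*K*β*t^(α+1) + 2*M*K*β*t < T := by
    have h := hφc.tendsto
    rw [hφ0] at h
    exact h.eventually_lt_const hT0
  rw [Metric.eventually_nhds_iff] at hev
  obtain ⟨ε, hε0, hε⟩ := hev
  refine ⟨min (ε/2) (r₁/2), by positivity, le_trans (min_le_right _ _) (by linarith), ?_⟩
  intro x hx0 hxc
  have hxne : x ≠ 0 := norm_pos_iff.mp hx0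
  have hxball : x ∈ ball (0:EuclideanSpace ℝ (Fin d)) r₁ := by
    rw [mem_ball, dist_zero_right]
    exact lt_of_le_of_lt (hxc.trans (min_le_right _ _)) (by linarith)
  have hxcb : x ∈ closedBall (0:EuclideanSpace ℝ (Fin d)) (r₁/2) := by
    rw [mem_closedBall, dist_zero_right]
    exact hxc.trans (min_le_right _ _)
  obtain ⟨hρm, hρM⟩ := hbd x hxball
  have hρ0 : 0 ≤ ρ x := le_trans hm.le hρm
  have hρdiff : DifferentiableAt ℝ ρ x :=
    (hρ.differentiableOn one_ne_zero).differentiableAt (isOpen_ball.mem_nhds hxball)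
  have hρd : HasFDerivAt ρ (fderiv ℝ ρ x) x := hρdiff.hasFDerivAt
  -- the derivative of the coefficient
  have hA : HasFDerivAt (fun y : EuclideanSpace ℝ (Fin d) => ρ y ^ 2)
      ((ρ x) • fderiv ℝ ρ x + (ρ x) • fderiv ℝ ρ x) x := by
    have h := hρd.mul hρd
    have heq : (fun y : EuclideanSpace ℝ (Fin d) => ρ y ^ 2) = fun y : EuclideanSpace ℝ (Fin d) => ρ y * ρ y := by
      funext y; ring
    rw [heq]
    exact h
  have hB : HasFDerivAt (fun y : EuclideanSpace ℝ (Fin d) => 1 + ‖y‖ ^ (-α))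
      ((-α * ‖x‖ ^ (-α - 2)) • innerSL ℝ x) x :=
    (hasFDerivAt_norm_rpow' hxne (-α)).const_add 1
  have hC : HasFDerivAt (fun y : EuclideanSpace ℝ (Fin d) => β * ‖y‖ ^ (β - 2))
      (β • ((β - 2) * ‖x‖ ^ (β - 2 - 2)) • innerSL ℝ x) x :=
    (hasFDerivAt_norm_rpow' hxne (β - 2)).const_mul β
  have hs : HasFDerivAt
      (fun y : EuclideanSpace ℝ (Fin d) => ρ y ^ 2 * (1 + ‖y‖ ^ (-α)) * (β * ‖y‖ ^ (β - 2)))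
      ((ρ x ^ 2 * (1 + ‖x‖ ^ (-α))) • (β • ((β - 2) * ‖x‖ ^ (β - 2 - 2)) • innerSL ℝ x)
        + (β * ‖x‖ ^ (β - 2)) •
          ((ρ x ^ 2) • ((-α * ‖x‖ ^ (-α - 2)) • innerSL ℝ x)
            + (1 + ‖x‖ ^ (-α)) • ((ρ x) • fderiv ℝ ρ x + (ρ x) • fderiv ℝ ρ x))) x :=
    (hA.mul hB).mul hC
  set S := (ρ x ^ 2 * (1 + ‖x‖ ^ (-α))) • (β • ((β - 2) * ‖x‖ ^ (β - 2 - 2)) • innerSL ℝ x)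
        + (β * ‖x‖ ^ (β - 2)) •
          ((ρ x ^ 2) • ((-α * ‖x‖ ^ (-α - 2)) • innerSL ℝ x)
            + (1 + ‖x‖ ^ (-α)) • ((ρ x) • fderiv ℝ ρ x + (ρ x) • fderiv ℝ ρ x)) with hSdef
  have hG : HasFDerivAt
      (fun y : EuclideanSpace ℝ (Fin d) => (ρ y ^ 2 * (1 + ‖y‖ ^ (-α)) * (β * ‖y‖ ^ (β - 2))) • y)
      ((ρ x ^ 2 * (1 + ‖x‖ ^ (-α)) * (β * ‖x‖ ^ (β - 2))) •
          ContinuousLinearMap.id ℝ (EuclideanSpace ℝ (Fin d)) + S.smulRight x) x :=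
    hs.smul (hasFDerivAt_id x)
  have hFG : (fun y : EuclideanSpace ℝ (Fin d) => ((ρ y) ^ 2 * (1 + ‖y‖ ^ (-α))) •
        gradient (fun z : EuclideanSpace ℝ (Fin d) => ‖z‖ ^ β) y)
      =ᶠ[nhds x] (fun y : EuclideanSpace ℝ (Fin d) => (ρ y ^ 2 * (1 + ‖y‖ ^ (-α)) * (β * ‖y‖ ^ (β - 2))) • y) := by
    have hmem : ({0}ᶜ : Set (EuclideanSpace ℝ (Fin d))) ∈ nhds x :=
      isOpen_compl_singleton.mem_nhds (by simpa using hxne)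
    filter_upwards [hmem] with y hy
    have hyne : y ≠ 0 := hy
    rw [gradient_norm_rpow' hyne β, smul_smul, mul_assoc]
  have hfder : fderiv ℝ (fun y : EuclideanSpace ℝ (Fin d) => ((ρ y) ^ 2 * (1 + ‖y‖ ^ (-α))) •
        gradient (fun z : EuclideanSpace ℝ (Fin d) => ‖z‖ ^ β) y) x
      = (ρ x ^ 2 * (1 + ‖x‖ ^ (-α)) * (β * ‖x‖ ^ (β - 2))) •
          ContinuousLinearMap.id ℝ (EuclideanSpace ℝ (Fin d)) + S.smulRight x := by
    rw [hFG.fderiv_eq, hG.fderiv]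
  rw [hfder, div_sum_eq']
  -- now a scalar inequality
  have ht : (0:ℝ) < ‖x‖ := hx0
  have htt : ‖x‖ * ‖x‖ = ‖x‖ ^ (2:ℝ) := by rw [Real.rpow_two, sq]
  have hE1 : ‖x‖ ^ (β - 2 - 2) * (‖x‖ * ‖x‖) = ‖x‖ ^ (β - 2) := by
    rw [htt, ← Real.rpow_add ht]; congr 1; ring
  have hE2 : ‖x‖ ^ (-α - 2) * (‖x‖ * ‖x‖) = ‖x‖ ^ (-α) := by
    rw [htt, ← Real.rpow_add ht]; congr 1; ring
  have hE3 : ‖x‖ ^ (-(α + 2 - β)) = ‖x‖ ^ (β - 2) * ‖x‖ ^ (-α) := by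
    rw [← Real.rpow_add ht]; congr 1; ring
  have hα1 : ‖x‖ ^ α * ‖x‖ ^ (-α) = 1 := by
    rw [← Real.rpow_add ht]; simp
  have hα2 : ‖x‖ ^ (α + 1) * ‖x‖ ^ (-α) = ‖x‖ := by
    rw [← Real.rpow_add ht, show α + 1 + -α = 1 by ring, Real.rpow_one]
  set a := ‖x‖ ^ (β - 2) with hadef
  set b := ‖x‖ ^ (-α) with hbdef
  have ha : 0 < a := Real.rpow_pos_of_pos ht _
  have hb : 0 < b := Real.rpow_pos_of_pos ht _
  set Dx := fderiv ℝ ρ x x with hDxdef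
  have hDx : |Dx| ≤ K * ‖x‖ := by
    calc |Dx| = ‖fderiv ℝ ρ x x‖ := by rw [hDxdef, Real.norm_eq_abs]
      _ ≤ ‖fderiv ℝ ρ x‖ * ‖x‖ := (fderiv ℝ ρ x).le_opNorm x
      _ ≤ K * ‖x‖ := mul_le_mul_of_nonneg_right (hK x hxcb) ht.le
  have hSx : S x = (ρ x ^ 2 * (1 + b)) * (β * ((β - 2) * ‖x‖ ^ (β - 2 - 2) * (‖x‖ * ‖x‖)))
      + (β * a) * ((ρ x ^ 2) * (-α * ‖x‖ ^ (-α - 2) * (‖x‖ * ‖x‖))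
        + (1 + b) * (ρ x * Dx + ρ x * Dx)) := by
    rw [hSdef]
    simp only [ContinuousLinearMap.add_apply, ContinuousLinearMap.coe_smul', Pi.smul_apply,
      smul_eq_mul, innerSL_apply_apply, ContinuousLinearMap.smulRight_apply]
    simp only [innerSL_apply_apply, real_inner_self_eq_norm_mul_norm]
    try ring
  rw [hSx, hE3]
  -- final computation
  have key : (d:ℝ) * (ρ x ^ 2 * (1 + b) * (β * a))
      + ((ρ x ^ 2 * (1 + b)) * (β * ((β - 2) * ‖x‖ ^ (β - 2 - 2) * (‖x‖ * ‖x‖)))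
      + (β * a) * ((ρ x ^ 2) * (-α * ‖x‖ ^ (-α - 2) * (‖x‖ * ‖x‖))
        + (1 + b) * (ρ x * Dx + ρ x * Dx)))
      = β * ρ x ^ 2 * ((d:ℝ) + β - 2) * a + β * ρ x ^ 2 * ((d:ℝ) + β - 2 - α) * (a * b)
        + 2 * ρ x * Dx * β * (a + a * b) := by
    linear_combination (ρ x ^ 2 * (1 + b) * β * (β - 2)) * hE1
      + (β * a * ρ x ^ 2 * (-α)) * hE2
  rw [key]
  -- inequalities
  have hDx1 : Dx ≤ K * ‖x‖ := (abs_le.mp hDx).2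
  have hDx2 : -(K * ‖x‖) ≤ Dx := (abs_le.mp hDx).1
  have hρsq : ρ x ^ 2 ≤ M ^ 2 := pow_le_pow_left₀ hρ0 hρM 2
  have hmsq : m ^ 2 ≤ ρ x ^ 2 := pow_le_pow_left₀ hm.le hρm 2
  have hab : 0 < a * (1 + b) := by positivity
  have i1 : β * ρ x ^ 2 * ((d:ℝ) + β - 2) * a ≤ β * M ^ 2 * ((d:ℝ) + β - 2) * a := by
    have hcoef : 0 ≤ β * ((d:ℝ) + β - 2) * a :=
      mul_nonneg (mul_nonneg hβ0.le (by linarith)) ha.le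
    have h := mul_le_mul_of_nonneg_right hρsq hcoef
    linarith [h]
  have i2 : 2 * ρ x * Dx * β * (a + a * b) ≤ 2 * M * (K * ‖x‖) * β * (a + a * b) := by
    have ha1 : ρ x * Dx ≤ ρ x * (K * ‖x‖) := mul_le_mul_of_nonneg_left hDx1 hρ0
    have ha2 : ρ x * (K * ‖x‖) ≤ M * (K * ‖x‖) :=
      mul_le_mul_of_nonneg_right hρM (mul_nonneg hK0 ht.le)
    have h1 : 2 * ρ x * Dx ≤ 2 * M * (K * ‖x‖) := by linarith
    have h2 : 0 ≤ β * (a + a * b) :=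
      mul_nonneg hβ0.le (by positivity)
    have h := mul_le_mul_of_nonneg_right h1 h2
    linarith [h]
  have hφt : β*M^2*((d:ℝ)+β-2)*‖x‖^α + 2*M*K*β*‖x‖^(α+1) + 2*M*K*β*‖x‖ < T := by
    apply hε
    rw [Real.dist_eq, sub_zero, abs_of_pos ht]
    exact lt_of_le_of_lt (hxc.trans (min_le_left _ _)) (by linarith)
  have i3 : β * M ^ 2 * ((d:ℝ) + β - 2) * a + 2 * M * (K * ‖x‖) * β * (a + a * b)
      = (β*M^2*((d:ℝ)+β-2)*‖x‖^α + 2*M*K*β*‖x‖^(α+1) + 2*M*K*β*‖x‖) * (a * b) := by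
    linear_combination (-(β * M ^ 2 * ((d:ℝ) + β - 2) * a)) * hα1
      + (-(2 * M * K * β * a)) * hα2
  have i4 : (β*M^2*((d:ℝ)+β-2)*‖x‖^α + 2*M*K*β*‖x‖^(α+1) + 2*M*K*β*‖x‖) * (a * b)
      ≤ T * (a * b) :=
    mul_le_mul_of_nonneg_right hφt.le (by positivity)
  have i6 : T * (a * b) ≤ β * (α + 2 - β - d) * ρ x ^ 2 / 2 * (a * b) := by
    rw [hTdef]
    have h0 : 0 ≤ β * (α + 2 - β - d) := mul_nonneg hβ0.le (by linarith)
    have h1 := mul_le_mul_of_nonneg_left hmsq h0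
    have h2 : β * (α + 2 - β - d) * m ^ 2 / 2 ≤ β * (α + 2 - β - d) * ρ x ^ 2 / 2 := by
      linarith
    exact mul_le_mul_of_nonneg_right h2 (by positivity)
  calc β * ρ x ^ 2 * ((d:ℝ) + β - 2) * a + β * ρ x ^ 2 * ((d:ℝ) + β - 2 - α) * (a * b)
        + 2 * ρ x * Dx * β * (a + a * b)
      ≤ (β * M ^ 2 * ((d:ℝ) + β - 2) * a + 2 * M * (K * ‖x‖) * β * (a + a * b))
        + β * ρ x ^ 2 * ((d:ℝ) + β - 2 - α) * (a * b) := by linarith [i1, i2]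
    _ = (β*M^2*((d:ℝ)+β-2)*‖x‖^α + 2*M*K*β*‖x‖^(α+1) + 2*M*K*β*‖x‖) * (a * b)
        + β * ρ x ^ 2 * ((d:ℝ) + β - 2 - α) * (a * b) := by linear_combination i3
    _ ≤ T * (a * b) + β * ρ x ^ 2 * ((d:ℝ) + β - 2 - α) * (a * b) := by linarith [i4]
    _ ≤ β * (α + 2 - β - d) * ρ x ^ 2 / 2 * (a * b)
        + β * ρ x ^ 2 * ((d:ℝ) + β - 2 - α) * (a * b) := by linarith [i6]
    _ = -(β / 2) * (α + 2 - β - (d:ℝ)) * ρ x ^ 2 * (a * b) := by ring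
end

section
/- (Discrete local Hölder-type estimate, deterministic core) Let X ⊂ ℝ^d be a finite point set, ε > 0, and suppose x, y ∈ X with |x−y| ≤ ε are such that the number of points of X in B(x,ε) ∩ B(y,ε) is at least N ≥ 1. Let γ̂: ℝ^d → [1,∞) be a weight and let GE(u) = (1/(2n²ε²)) Σ_{p,q∈X} (γ̂(p)+γ̂(q)) η_ε(p−q) |u(p)−u(q)|², where η_ε(z) = ε^{-d}η(|z|/ε) with η ≥ 1 on [0,1]. Then |u(x)−u(y)|² ≤ (C n² ε^{d+2} / (min{γ̂(x),γ̂(y)} · N)) · GE(u) for a dimensional constant C. -/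
open MeasureTheory Metric Filter
set_option maxHeartbeats 1000000 in

/-- deterministic core of the discrete local Hölder estimate: if the
common `ε`-neighborhood of two graph points `x, y` with `|x-y| ≤ ε` contains at least
`N` points, then `|u(x)-u(y)|²` is controlled by the weighted graph Dirichlet energy. -/
theorem stmt_17 :
    ∃ C : ℝ, 0 < C ∧
      ∀ (d n : ℕ) (ε : ℝ), 0 < ε → 1 ≤ n →
      ∀ η : ℝ → ℝ, (∀ t, 0 ≤ η t) → (∀ t ∈ Set.Icc (0 : ℝ) 1, 1 ≤ η t) →
      ∀ gam : EuclideanSpace ℝ (Fin d) → ℝ, (∀ p, 1 ≤ gam p) →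
      ∀ (X : Finset (EuclideanSpace ℝ (Fin d))) (u : EuclideanSpace ℝ (Fin d) → ℝ)
        (x y : EuclideanSpace ℝ (Fin d)) (N : ℕ),
        x ∈ X → y ∈ X → dist x y ≤ ε → 1 ≤ N →
        (N : ℝ) ≤ (X.filter (fun z => dist z x < ε ∧ dist z y < ε)).card →
        (u x - u y) ^ 2 ≤
          (C * (n : ℝ) ^ 2 * ε ^ (d + 2) / (min (gam x) (gam y) * N)) *
            ((1 / (2 * (n : ℝ) ^ 2 * ε ^ 2)) *
              ∑ p ∈ X, ∑ q ∈ X,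
                (gam p + gam q) * ((ε ^ d)⁻¹ * η (dist p q / ε)) * (u p - u q) ^ 2) := by
  refine ⟨4, by norm_num, ?_⟩
  intro d n ε hε hn η hη0 hη1 gam hgam X u x y N hx hy hxy hN hNcard
  classical
  set m := min (gam x) (gam y) with hm
  have hm1 : (1 : ℝ) ≤ m := le_min (hgam x) (hgam y)
  have hm0 : (0 : ℝ) < m := lt_of_lt_of_le one_pos hm1
  have hεd : (0 : ℝ) < ε ^ d := pow_pos hε d
  have hN0 : (0 : ℝ) < (N : ℝ) := by exact_mod_cast Nat.lt_of_lt_of_le Nat.zero_lt_one hN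
  have hn0 : (0 : ℝ) < (n : ℝ) := by exact_mod_cast Nat.lt_of_lt_of_le Nat.zero_lt_one hn
  set f : EuclideanSpace ℝ (Fin d) → EuclideanSpace ℝ (Fin d) → ℝ :=
    fun p q => (gam p + gam q) * ((ε ^ d)⁻¹ * η (dist p q / ε)) * (u p - u q) ^ 2 with hf
  have hf0 : ∀ p q, 0 ≤ f p q := by
    intro p q
    have h1 : (0 : ℝ) ≤ gam p + gam q := by nlinarith [hgam p, hgam q]
    have h2 := hη0 (dist p q / ε)
    have := hεd.le
    positivity
  have hE0 : 0 ≤ ∑ p ∈ X, ∑ q ∈ X, f p q :=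
    Finset.sum_nonneg fun p _ => Finset.sum_nonneg fun q _ => hf0 p q
  by_cases huxy : u x = u y
  · rw [huxy, sub_self]
    have h1 : (0:ℝ) ≤ 4 * (n : ℝ) ^ 2 * ε ^ (d + 2) / (m * N) := by positivity
    have h2 : (0:ℝ) ≤ (1 / (2 * (n : ℝ) ^ 2 * ε ^ 2)) := by positivity
    simpa using mul_nonneg h1 (mul_nonneg h2 hE0)
  have hne : x ≠ y := fun h => huxy (by rw [h])
  set S := X.filter (fun z => dist z x < ε ∧ dist z y < ε) with hS
  have key : ∀ q ∈ S, m * (ε ^ d)⁻¹ * ((u x - u y) ^ 2 / 2) ≤ f x q + f y q := by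
    intro q hq
    rw [hS, Finset.mem_filter] at hq
    obtain ⟨hqX, hqx, hqy⟩ := hq
    have hηx : 1 ≤ η (dist x q / ε) := hη1 _ ⟨by positivity,
      by rw [div_le_one hε, dist_comm]; exact hqx.le⟩
    have hηy : 1 ≤ η (dist y q / ε) := hη1 _ ⟨by positivity,
      by rw [div_le_one hε, dist_comm]; exact hqy.le⟩
    have hmx : m ≤ gam x + gam q := le_trans (min_le_left _ _) (by nlinarith [hgam q])
    have hmy : m ≤ gam y + gam q := le_trans (min_le_right _ _) (by nlinarith [hgam q])
    have h1 : m * (ε ^ d)⁻¹ * (u x - u q) ^ 2 ≤ f x q := by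
      rw [hf]
      apply mul_le_mul_of_nonneg_right _ (sq_nonneg _)
      calc m * (ε ^ d)⁻¹ = m * ((ε ^ d)⁻¹ * 1) := by ring
        _ ≤ (gam x + gam q) * ((ε ^ d)⁻¹ * η (dist x q / ε)) := by
            apply mul_le_mul hmx (by nlinarith [inv_pos.2 hεd]) (by positivity)
              (by nlinarith [hgam x, hgam q])
    have h2 : m * (ε ^ d)⁻¹ * (u y - u q) ^ 2 ≤ f y q := by
      rw [hf]
      apply mul_le_mul_of_nonneg_right _ (sq_nonneg _)
      calc m * (ε ^ d)⁻¹ = m * ((ε ^ d)⁻¹ * 1) := by ring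
        _ ≤ (gam y + gam q) * ((ε ^ d)⁻¹ * η (dist y q / ε)) := by
            apply mul_le_mul hmy (by nlinarith [inv_pos.2 hεd]) (by positivity)
              (by nlinarith [hgam y, hgam q])
    have h3 : (u x - u y) ^ 2 / 2 ≤ (u x - u q) ^ 2 + (u y - u q) ^ 2 := by
      nlinarith [sq_nonneg (u x + u y - 2 * u q)]
    have h4 : m * (ε ^ d)⁻¹ * ((u x - u y) ^ 2 / 2) ≤
        m * (ε ^ d)⁻¹ * ((u x - u q) ^ 2 + (u y - u q) ^ 2) := by
      apply mul_le_mul_of_nonneg_left h3 (by positivity)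
    nlinarith [h1, h2, h4]
  have hsum1 : (S.card : ℝ) * (m * (ε ^ d)⁻¹ * ((u x - u y) ^ 2 / 2)) ≤
      ∑ q ∈ S, (f x q + f y q) := by
    have := Finset.card_nsmul_le_sum S (fun q => f x q + f y q)
      (m * (ε ^ d)⁻¹ * ((u x - u y) ^ 2 / 2)) key
    simpa [nsmul_eq_mul] using this
  have hsub : ∑ q ∈ S, (f x q + f y q) ≤ ∑ p ∈ X, ∑ q ∈ X, f p q := by
    have hSX : S ⊆ X := Finset.filter_subset _ _
    have h1 : ∀ p, ∑ q ∈ S, f p q ≤ ∑ q ∈ X, f p q := fun p =>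
      Finset.sum_le_sum_of_subset_of_nonneg hSX (fun q _ _ => hf0 p q)
    have hxyX : ({x, y} : Finset (EuclideanSpace ℝ (Fin d))) ⊆ X := by
      intro z hz
      rcases Finset.mem_insert.1 hz with h | h
      · rwa [h]
      · rw [Finset.mem_singleton.1 h]; exact hy
    calc ∑ q ∈ S, (f x q + f y q) = ∑ p ∈ ({x, y} : Finset _), ∑ q ∈ S, f p q := by
          rw [Finset.sum_pair hne, ← Finset.sum_add_distrib]
      _ ≤ ∑ p ∈ ({x, y} : Finset _), ∑ q ∈ X, f p q :=
          Finset.sum_le_sum fun p _ => h1 p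
      _ ≤ ∑ p ∈ X, ∑ q ∈ X, f p q :=
          Finset.sum_le_sum_of_subset_of_nonneg hxyX
            (fun p _ _ => Finset.sum_nonneg fun q _ => hf0 p q)
  have hE : (N : ℝ) * (m * (ε ^ d)⁻¹ * ((u x - u y) ^ 2 / 2)) ≤
      ∑ p ∈ X, ∑ q ∈ X, f p q := by
    refine le_trans ?_ (le_trans hsum1 hsub)
    apply mul_le_mul_of_nonneg_right hNcard (by positivity)
  have hrw : (4 : ℝ) * (n : ℝ) ^ 2 * ε ^ (d + 2) / (m * N) *
      ((1 / (2 * (n : ℝ) ^ 2 * ε ^ 2)) * ∑ p ∈ X, ∑ q ∈ X, f p q) =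
      2 * ε ^ d / (m * N) * ∑ p ∈ X, ∑ q ∈ X, f p q := by
    rw [pow_add]
    field_simp
    ring
  rw [hrw]
  calc (u x - u y) ^ 2
      = 2 * ε ^ d / (m * N) * ((N : ℝ) * (m * (ε ^ d)⁻¹ * ((u x - u y) ^ 2 / 2))) := by
        field_simp
    _ ≤ 2 * ε ^ d / (m * N) * ∑ p ∈ X, ∑ q ∈ X, f p q :=
        mul_le_mul_of_nonneg_left hE (by positivity)
end
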